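/- Let G be a (square, prism, pyramid, theta, even wheel)-free graph and C a minimal separator of G that is not a clique. Then G − C has exactly two full connected components, where a component D of G − C is full if every vertex of C has a neighbor in D. -/

import Mathlib

open SimpleGraph

variable {V : Type*}

/-- The arc of the cycle `ZMod n` going from `i` to `j` in increasing direction. -/
def arc {n : ℕ} (i j : ZMod n) : Set (ZMod n) := {k | (k - i).val ≤ (j - i).val}

/-- `f` is a hole (induced cycle of length `n ≥ 4`) in `G`. -/
def IsHoleEmb (G : SimpleGraph V) (n : ℕ) (f : ZMod n → V) : Prop :=
  4 ≤ n ∧ Function.Injective f ∧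
    ∀ i j : ZMod n, G.Adj (f i) (f j) ↔ (j = i + 1 ∨ i = j + 1)

/-- Neighbors of `u` on the hole `f`. -/
def NbrsOn (G : SimpleGraph V) {n : ℕ} (f : ZMod n → V) (u : V) : Set V :=
  {w | w ∈ Set.range f ∧ G.Adj u w}

/-- `u` is major w.r.t. the hole `f`: its neighbors on the hole are not contained in a
3-vertex subpath of the hole. -/
def MajorWrt (G : SimpleGraph V) {n : ℕ} (f : ZMod n → V) (u : V) : Prop :=
  u ∉ Set.range f ∧ ¬ ∃ i : ZMod n, NbrsOn G f u ⊆ {f (i - 1), f i, f (i + 1)}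

/-- `u` is a clone of `f i` w.r.t. the hole `f`. -/
def CloneWrt (G : SimpleGraph V) {n : ℕ} (f : ZMod n → V) (u : V) (i : ZMod n) : Prop :=
  u ∉ Set.range f ∧ NbrsOn G f u = {f (i - 1), f i, f (i + 1)}

/-- `u` and `v` are nested w.r.t. the hole `f`. -/
def NestedWrt (G : SimpleGraph V) {n : ℕ} (f : ZMod n → V) (u v : V) : Prop :=
  ∃ i j : ZMod n, i ≠ j ∧ NbrsOn G f u ⊆ f '' arc i j ∧ NbrsOn G f v ⊆ f '' arc j i

/-- The arc from `f i` to `f j` is a `u`-sector of the hole `f`. -/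
def IsSector (G : SimpleGraph V) {n : ℕ} (f : ZMod n → V) (u : V) (i j : ZMod n) : Prop :=
  i ≠ j ∧ G.Adj u (f i) ∧ G.Adj u (f j) ∧
    ∀ k ∈ arc i j, k ≠ i → k ≠ j → ¬ G.Adj u (f k)

/-- `g` is a chordless (induced) path of length `m` in `G`. -/
def IsCPath (G : SimpleGraph V) (m : ℕ) (g : Fin (m + 1) → V) : Prop :=
  Function.Injective g ∧
    ∀ i j : Fin (m + 1), G.Adj (g i) (g j) ↔ (i.val + 1 = j.val ∨ j.val + 1 = i.val)

def HasSquare (G : SimpleGraph V) : Prop := ∃ f : ZMod 4 → V, IsHoleEmb G 4 f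

def HasEvenHole (G : SimpleGraph V) : Prop :=
  ∃ (n : ℕ) (f : ZMod n → V), IsHoleEmb G n f ∧ Even n

def HasEvenWheel (G : SimpleGraph V) : Prop :=
  ∃ (n : ℕ) (f : ZMod n → V) (v : V), IsHoleEmb G n f ∧ v ∉ Set.range f ∧
    3 ≤ (NbrsOn G f v).ncard ∧ Even (NbrsOn G f v).ncard

/-- A theta configuration: three internally disjoint chordless paths of length `≥ 2`
from `f₁ 0` to `f₁ (last)`, with no edges between the paths except at the two ends. -/
def ThetaConfig (G : SimpleGraph V) (n₁ n₂ n₃ : ℕ) (f₁ : Fin (n₁ + 1) → V)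
    (f₂ : Fin (n₂ + 1) → V) (f₃ : Fin (n₃ + 1) → V) : Prop :=
  2 ≤ n₁ ∧ 2 ≤ n₂ ∧ 2 ≤ n₃ ∧
  IsCPath G n₁ f₁ ∧ IsCPath G n₂ f₂ ∧ IsCPath G n₃ f₃ ∧
  f₂ 0 = f₁ 0 ∧ f₃ 0 = f₁ 0 ∧
  f₂ (Fin.last n₂) = f₁ (Fin.last n₁) ∧ f₃ (Fin.last n₃) = f₁ (Fin.last n₁) ∧
  ¬ G.Adj (f₁ 0) (f₁ (Fin.last n₁)) ∧
  (∀ i j, i ≠ 0 → i ≠ Fin.last n₁ → j ≠ 0 → j ≠ Fin.last n₂ →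
    f₁ i ≠ f₂ j ∧ ¬ G.Adj (f₁ i) (f₂ j)) ∧
  (∀ i j, i ≠ 0 → i ≠ Fin.last n₁ → j ≠ 0 → j ≠ Fin.last n₃ →
    f₁ i ≠ f₃ j ∧ ¬ G.Adj (f₁ i) (f₃ j)) ∧
  (∀ i j, i ≠ 0 → i ≠ Fin.last n₂ → j ≠ 0 → j ≠ Fin.last n₃ →
    f₂ i ≠ f₃ j ∧ ¬ G.Adj (f₂ i) (f₃ j))

def HasTheta (G : SimpleGraph V) : Prop :=
  ∃ (n₁ n₂ n₃ : ℕ) (f₁ : Fin (n₁ + 1) → V) (f₂ : Fin (n₂ + 1) → V) (f₃ : Fin (n₃ + 1) → V),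
    ThetaConfig G n₁ n₂ n₃ f₁ f₂ f₃

/-- A prism configuration: three pairwise disjoint chordless paths of length `≥ 1`
joining the triangle `f₁ 0, f₂ 0, f₃ 0` to the triangle `f₁ last, f₂ last, f₃ last`,
with no other edges between the paths. -/
def PrismConfig (G : SimpleGraph V) (n₁ n₂ n₃ : ℕ) (f₁ : Fin (n₁ + 1) → V)
    (f₂ : Fin (n₂ + 1) → V) (f₃ : Fin (n₃ + 1) → V) : Prop :=
  1 ≤ n₁ ∧ 1 ≤ n₂ ∧ 1 ≤ n₃ ∧
  IsCPath G n₁ f₁ ∧ IsCPath G n₂ f₂ ∧ IsCPath G n₃ f₃ ∧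
  (∀ i j, f₁ i ≠ f₂ j) ∧ (∀ i j, f₁ i ≠ f₃ j) ∧ (∀ i j, f₂ i ≠ f₃ j) ∧
  (∀ i j, G.Adj (f₁ i) (f₂ j) ↔ (i = 0 ∧ j = 0) ∨ (i = Fin.last n₁ ∧ j = Fin.last n₂)) ∧
  (∀ i j, G.Adj (f₁ i) (f₃ j) ↔ (i = 0 ∧ j = 0) ∨ (i = Fin.last n₁ ∧ j = Fin.last n₃)) ∧
  (∀ i j, G.Adj (f₂ i) (f₃ j) ↔ (i = 0 ∧ j = 0) ∨ (i = Fin.last n₂ ∧ j = Fin.last n₃))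

def HasPrism (G : SimpleGraph V) : Prop :=
  ∃ (n₁ n₂ n₃ : ℕ) (f₁ : Fin (n₁ + 1) → V) (f₂ : Fin (n₂ + 1) → V) (f₃ : Fin (n₃ + 1) → V),
    PrismConfig G n₁ n₂ n₃ f₁ f₂ f₃

/-- A pyramid configuration: three chordless paths of length `≥ 1` (two of length `≥ 2`)
from a common apex `f₁ 0` to the triangle `f₁ last, f₂ last, f₃ last`, vertex-disjoint
except at the apex, with no edges between the paths except those of the triangle and
those at the apex. -/
def PyramidConfig (G : SimpleGraph V) (n₁ n₂ n₃ : ℕ) (f₁ : Fin (n₁ + 1) → V)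
    (f₂ : Fin (n₂ + 1) → V) (f₃ : Fin (n₃ + 1) → V) : Prop :=
  1 ≤ n₁ ∧ 1 ≤ n₂ ∧ 1 ≤ n₃ ∧
  ((2 ≤ n₁ ∧ 2 ≤ n₂) ∨ (2 ≤ n₁ ∧ 2 ≤ n₃) ∨ (2 ≤ n₂ ∧ 2 ≤ n₃)) ∧
  IsCPath G n₁ f₁ ∧ IsCPath G n₂ f₂ ∧ IsCPath G n₃ f₃ ∧
  f₂ 0 = f₁ 0 ∧ f₃ 0 = f₁ 0 ∧
  (∀ i j, ¬(i = 0 ∧ j = 0) → f₁ i ≠ f₂ j) ∧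
  (∀ i j, ¬(i = 0 ∧ j = 0) → f₁ i ≠ f₃ j) ∧
  (∀ i j, ¬(i = 0 ∧ j = 0) → f₂ i ≠ f₃ j) ∧
  (∀ i j, i ≠ 0 → j ≠ 0 → (G.Adj (f₁ i) (f₂ j) ↔ (i = Fin.last n₁ ∧ j = Fin.last n₂))) ∧
  (∀ i j, i ≠ 0 → j ≠ 0 → (G.Adj (f₁ i) (f₃ j) ↔ (i = Fin.last n₁ ∧ j = Fin.last n₃))) ∧
  (∀ i j, i ≠ 0 → j ≠ 0 → (G.Adj (f₂ i) (f₃ j) ↔ (i = Fin.last n₂ ∧ j = Fin.last n₃)))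

def HasPyramid (G : SimpleGraph V) : Prop :=
  ∃ (n₁ n₂ n₃ : ℕ) (f₁ : Fin (n₁ + 1) → V) (f₂ : Fin (n₂ + 1) → V) (f₃ : Fin (n₃ + 1) → V),
    PyramidConfig G n₁ n₂ n₃ f₁ f₂ f₃

/-- The class 𝒞 of (square, prism, pyramid, theta, even wheel)-free graphs. -/
def ClassC (G : SimpleGraph V) : Prop :=
  ¬ HasSquare G ∧ ¬ HasPrism G ∧ ¬ HasPyramid G ∧ ¬ HasTheta G ∧ ¬ HasEvenWheel G

/-- `C` separates `a` from `b`: `a, b ∉ C` and every walk from `a` to `b` meets `C`. -/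
def SepSet (G : SimpleGraph V) (C : Set V) (a b : V) : Prop :=
  a ∉ C ∧ b ∉ C ∧ ∀ p : G.Walk a b, ∃ v ∈ p.support, v ∈ C

/-- `C` is a minimal separator of `G`. -/
def IsMinSep (G : SimpleGraph V) (C : Set V) : Prop :=
  ∃ a b, SepSet G C a b ∧ ∀ C' ⊆ C, SepSet G C' a b → C' = C

/-- The set of vertices outside `S` with a neighbor in `S`. -/
def nbd (G : SimpleGraph V) (S : Set V) : Set V := {v | v ∉ S ∧ ∃ u ∈ S, G.Adj u v}

def ConnectedIn (G : SimpleGraph V) (D : Set V) : Prop :=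
  ∀ x ∈ D, ∀ y ∈ D, ∃ p : G.Walk x y, ∀ v ∈ p.support, v ∈ D

/-- `D` is a connected component of `G - C`. -/
def IsCompAvoiding (G : SimpleGraph V) (C D : Set V) : Prop :=
  D.Nonempty ∧ (∀ v ∈ D, v ∉ C) ∧ ConnectedIn G D ∧
    ∀ u ∈ D, ∀ v, v ∉ C → G.Adj u v → v ∈ D

/-- `D` is a full component of `G - C`: every vertex of `C` has a neighbor in `D`. -/
def IsFullComp (G : SimpleGraph V) (C D : Set V) : Prop :=
  IsCompAvoiding G C D ∧ ∀ c ∈ C, ∃ d ∈ D, G.Adj c d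

/-- `G` contains a `k`-semi-induced matching. -/
def HasSemiInducedMatching (G : SimpleGraph V) (k : ℕ) : Prop :=
  ∃ x y : Fin k → V, Function.Injective x ∧ Function.Injective y ∧
    (∀ i j, x i ≠ y j) ∧ ∀ i j, (G.Adj (x i) (y j) ↔ i = j)

/-- `f a` together with all its clones w.r.t. the hole `f`. -/
def CloneSet (G : SimpleGraph V) {n : ℕ} (f : ZMod n → V) (a : ZMod n) : Set V :=
  insert (f a) {u | CloneWrt G f u a}

/-- `f` is a `(C, c₁, c₂)`-hole, where `f p = c₁`, `f q = c₂`, the interior of one arc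
lies in `L` and the interior of the other arc lies in `R`. -/
def IsCHoleAt (G : SimpleGraph V) (C L R : Set V) (c₁ c₂ : V) (n : ℕ)
    (f : ZMod n → V) (p q : ZMod n) : Prop :=
  IsHoleEmb G n f ∧ p ≠ q ∧ f p = c₁ ∧ f q = c₂ ∧
  Set.range f ∩ C = {c₁, c₂} ∧
  (∀ k ∈ arc p q, k ≠ p → k ≠ q → f k ∈ L) ∧
  (∀ k ∈ arc q p, k ≠ p → k ≠ q → f k ∈ R)

/-- `C` is a proper (minimal, non-clique) separator with full components `L` and `R`. -/
def ProperSepWith (G : SimpleGraph V) (C L R : Set V) : Prop :=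
  ¬ G.IsClique C ∧ L ≠ R ∧ IsFullComp G C L ∧ IsFullComp G C R

/-!
A minimal `(a, b)`-separator `C` has the components of `a` and of `b` in `G - C` as full
components: a vertex of `C` without a neighbour in the component of `a` could be dropped
from `C`. If there were a third full component, take two non-adjacent vertices `c₁, c₂`
of `C`; a shortest `c₁c₂`-path through each of the three full components is chordless,
and there are no edges between distinct components, so the three paths form a theta.
-/

theorem SimpleGraph.Walk.adj_getVert_iff_of_length_eq_dist {G : SimpleGraph V} {u v : V}
    {p : G.Walk u v} (hp : p.length = G.dist u v) {i j : ℕ} (hi : i ≤ p.length)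
    (hj : j ≤ p.length) : G.Adj (p.getVert i) (p.getVert j) ↔ i + 1 = j ∨ j + 1 = i := by
  have no_chord : ∀ {i j}, i + 1 < j → j ≤ p.length → ¬ G.Adj (p.getVert i) (p.getVert j) := by
    intro i j hij hj hadj
    have := G.dist_le ((p.take i).append (cons hadj (p.drop j)))
    simp only [length_append, take_length, length_cons, drop_length] at this
    omega
  refine ⟨fun hadj => ?_, ?_⟩
  · rcases Nat.lt_trichotomy (i + 1) j with h | h | h
    · exact absurd hadj (no_chord h hj)
    · exact .inl h
    rcases Nat.lt_trichotomy (j + 1) i with h' | h' | h'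
    · exact absurd hadj.symm (no_chord h' hi)
    · exact .inr h'
    · obtain rfl : i = j := by omega
      exact absurd hadj (G.loopless.irrefl _)
  · rintro (rfl | rfl)
    · exact p.adj_getVert_succ (by omega)
    · exact (p.adj_getVert_succ (by omega)).symm

theorem isCPath_getVert_of_length_eq_dist {G : SimpleGraph V} {u v : V} {p : G.Walk u v}
    (hp : p.length = G.dist u v) : IsCPath G p.length (fun i => p.getVert i) := by
  refine ⟨fun i j hij => Fin.ext ?_, fun i j => ?_⟩
  · exact (p.isPath_of_length_eq_dist hp).getVert_injOn (Nat.lt_succ_iff.mp i.2)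
      (Nat.lt_succ_iff.mp j.2) hij
  · exact p.adj_getVert_iff_of_length_eq_dist hp (Nat.lt_succ_iff.mp i.2)
      (Nat.lt_succ_iff.mp j.2)

theorem IsCPath.map {W : Type*} {H : SimpleGraph W} {G : SimpleGraph V} (e : H ↪g G) {m : ℕ}
    {g : Fin (m + 1) → W} (hg : IsCPath H m g) : IsCPath G m (e ∘ g) :=
  ⟨e.injective.comp hg.1, fun i j => (e.map_adj_iff).trans (hg.2 i j)⟩

section Components

variable {G : SimpleGraph V} {C D D' : Set V} {a b : V}

theorem SepSet.symm (h : SepSet G C a b) : SepSet G C b a := by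
  refine ⟨h.2.1, h.1, fun p => ?_⟩
  obtain ⟨v, hv, hvC⟩ := h.2.2 p.reverse
  exact ⟨v, by simpa using hv, hvC⟩

/-- The vertex set of the component of `a` in `G - C`. -/
def compAvoiding (G : SimpleGraph V) (C : Set V) (a : V) : Set V :=
  {v | ∃ p : G.Walk a v, ∀ x ∈ p.support, x ∉ C}

theorem mem_compAvoiding_self (ha : a ∉ C) : a ∈ compAvoiding G C a :=
  ⟨.nil, by simpa using ha⟩

theorem notMem_of_mem_compAvoiding {v : V} (hv : v ∈ compAvoiding G C a) : v ∉ C := by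
  obtain ⟨p, hp⟩ := hv
  exact hp v p.end_mem_support

theorem mem_compAvoiding_of_adj {u v : V} (hu : u ∈ compAvoiding G C a) (hv : v ∉ C)
    (huv : G.Adj u v) : v ∈ compAvoiding G C a := by
  obtain ⟨p, hp⟩ := hu
  refine ⟨p.concat huv, fun x hx => ?_⟩
  rw [Walk.support_concat, List.mem_append, List.mem_singleton] at hx
  rcases hx with hx | rfl
  exacts [hp x hx, hv]

theorem connectedIn_compAvoiding : ConnectedIn G (compAvoiding G C a) := by
  have prefix_mem : ∀ {x} (p : G.Walk a x), (∀ v ∈ p.support, v ∉ C) →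
      ∀ v ∈ p.support, v ∈ compAvoiding G C a := by
    classical
    exact fun p hp v hv =>
      ⟨p.takeUntil v hv, fun x hx => hp x (p.support_takeUntil_subset_support hv hx)⟩
  rintro x ⟨px, hpx⟩ y ⟨py, hpy⟩
  refine ⟨px.reverse.append py, fun v hv => ?_⟩
  rw [Walk.mem_support_append_iff, Walk.support_reverse, List.mem_reverse] at hv
  rcases hv with hv | hv
  exacts [prefix_mem px hpx v hv, prefix_mem py hpy v hv]

theorem isCompAvoiding_compAvoiding (ha : a ∉ C) : IsCompAvoiding G C (compAvoiding G C a) :=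
  ⟨⟨a, mem_compAvoiding_self ha⟩, fun _ => notMem_of_mem_compAvoiding,
    connectedIn_compAvoiding, fun _ hu _ hv => mem_compAvoiding_of_adj hu hv⟩

theorem IsCompAvoiding.mem_of_walk (hD : IsCompAvoiding G C D) {x y : V} (p : G.Walk x y)
    (hx : x ∈ D) (hp : ∀ v ∈ p.support, v ∉ C) : y ∈ D := by
  induction p with
  | nil => exact hx
  | cons h q ih =>
    exact ih (hD.2.2.2 _ hx _ (hp _ (by simp)) h) fun v hv => hp v (by simp [hv])

theorem IsCompAvoiding.eq_compAvoiding (hD : IsCompAvoiding G C D) {x : V} (hx : x ∈ D) :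
    D = compAvoiding G C x := by
  refine Set.Subset.antisymm (fun y hy => ?_) fun y ⟨p, hp⟩ => hD.mem_of_walk p hx hp
  obtain ⟨p, hp⟩ := hD.2.2.1 x hx y hy
  exact ⟨p, fun v hv => hD.2.1 v (hp v hv)⟩

theorem IsCompAvoiding.ne_and_not_adj (hD : IsCompAvoiding G C D)
    (hD' : IsCompAvoiding G C D') (hne : D ≠ D') {u v : V} (hu : u ∈ D) (hv : v ∈ D') :
    u ≠ v ∧ ¬ G.Adj u v := by
  have eq_of_mem : ∀ {w}, w ∈ D → w ∈ D' → D = D' := fun hw hw' =>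
    (hD.eq_compAvoiding hw).trans (hD'.eq_compAvoiding hw').symm
  refine ⟨fun huv => hne (eq_of_mem hu (huv ▸ hv)), fun hadj => hne (eq_of_mem ?_ hv)⟩
  exact hD.2.2.2 u hu v (hD'.2.1 v hv) hadj

theorem exists_adj_compAvoiding_of_walk {x y : V} (p : G.Walk x y)
    (hx : x ∈ compAvoiding G C a) (hp : ∃ v ∈ p.support, v ∈ C) :
    ∃ c ∈ p.support, c ∈ C ∧ ∃ d ∈ compAvoiding G C a, G.Adj d c := by
  induction p with
  | nil =>
    obtain ⟨v, hv, hvC⟩ := hp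
    rw [Walk.support_nil, List.mem_singleton] at hv
    exact absurd (hv ▸ hvC) (notMem_of_mem_compAvoiding hx)
  | @cons u w _ h q ih =>
    by_cases hw : w ∈ C
    · exact ⟨w, by simp, hw, u, hx, h⟩
    obtain ⟨v, hv, hvC⟩ := hp
    rw [Walk.support_cons, List.mem_cons] at hv
    rcases hv with rfl | hv
    · exact absurd hvC (notMem_of_mem_compAvoiding hx)
    obtain ⟨c, hc, hcC, hcd⟩ := ih (mem_compAvoiding_of_adj hx hw h) ⟨v, hv, hvC⟩
    exact ⟨c, by simp [hc], hcC, hcd⟩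

theorem isFullComp_compAvoiding (hsep : SepSet G C a b)
    (hmin : ∀ C' ⊆ C, SepSet G C' a b → C' = C) : IsFullComp G C (compAvoiding G C a) := by
  set N := {c ∈ C | ∃ d ∈ compAvoiding G C a, G.Adj d c}
  have hN : SepSet G N a b := by
    refine ⟨fun ha => hsep.1 ha.1, fun hb => hsep.2.1 hb.1, fun p => ?_⟩
    obtain ⟨c, hc, hcC, hcd⟩ :=
      exists_adj_compAvoiding_of_walk p (mem_compAvoiding_self hsep.1) (hsep.2.2 p)
    exact ⟨c, hc, hcC, hcd⟩
  refine ⟨isCompAvoiding_compAvoiding hsep.1, fun c hc => ?_⟩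
  obtain ⟨-, d, hd, hdc⟩ : c ∈ N := (hmin N (Set.sep_subset _ _) hN).symm ▸ hc
  exact ⟨d, hd, hdc.symm⟩

theorem SepSet.compAvoiding_ne (hsep : SepSet G C a b) :
    compAvoiding G C a ≠ compAvoiding G C b := by
  intro h
  obtain ⟨p, hp⟩ : b ∈ compAvoiding G C a := h ▸ mem_compAvoiding_self hsep.2.1
  obtain ⟨v, hv, hvC⟩ := hsep.2.2 p
  exact hp v hv hvC

end Components

section Theta

variable {G : SimpleGraph V} {C D D' : Set V} {c₁ c₂ : V}

def IsCPathVia (G : SimpleGraph V) (D : Set V) (c₁ c₂ : V) (m : ℕ) (g : Fin (m + 1) → V) :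
    Prop :=
  2 ≤ m ∧ IsCPath G m g ∧ g 0 = c₁ ∧ g (Fin.last m) = c₂ ∧
    ∀ i, i ≠ 0 → i ≠ Fin.last m → g i ∈ D

/-- Witnessed by a shortest `c₁c₂`-walk in the subgraph induced by `D ∪ {c₁, c₂}`. -/
theorem IsFullComp.exists_isCPathVia (hD : IsFullComp G C D) (hc₁ : c₁ ∈ C) (hc₂ : c₂ ∈ C)
    (hne : c₁ ≠ c₂) (hnadj : ¬ G.Adj c₁ c₂) : ∃ m g, IsCPathVia G D c₁ c₂ m g := by
  obtain ⟨d₁, hd₁, h₁⟩ := hD.2 c₁ hc₁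
  obtain ⟨d₂, hd₂, h₂⟩ := hD.2 c₂ hc₂
  obtain ⟨w, hw⟩ := hD.1.2.2.1 d₁ hd₁ d₂ hd₂
  set S : Set V := insert c₁ (insert c₂ D)
  let W : G.Walk c₁ c₂ := .cons h₁ (w.concat h₂.symm)
  have hW : ∀ x ∈ W.support, x ∈ S := by
    intro x hx
    rw [Walk.support_cons, List.mem_cons, Walk.support_concat,
      List.mem_append, List.mem_singleton] at hx
    rcases hx with rfl | hx | rfl
    exacts [.inl rfl, .inr (.inr (hw x hx)), .inr (.inl rfl)]
  obtain ⟨p, hp⟩ := Reachable.exists_walk_length_eq_dist ⟨W.induce S hW⟩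
  have hcp := (isCPath_getVert_of_length_eq_dist hp).map (Embedding.induce S)
  have hlen : 2 ≤ p.length := by
    have h0 : p.length ≠ 0 := fun h => hne (congrArg Subtype.val (Walk.eq_of_length_eq_zero h))
    have h1 : p.length ≠ 1 := fun h => hnadj (induce_adj.mp (Walk.adj_of_length_eq_one h))
    omega
  refine ⟨p.length, _, hlen, hcp, by simp, by simp, fun i hi0 hil => ?_⟩
  rcases (p.getVert i).2 with hi | hi | hi
  · exact absurd (hcp.1 (hi.trans (by simp))) hi0
  · exact absurd (hcp.1 (hi.trans (by simp))) hil
  · exact hi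

theorem IsCPathVia.ne_and_not_adj {c₃ c₄ : V} {m m' : ℕ} {g : Fin (m + 1) → V}
    {g' : Fin (m' + 1) → V} (hg : IsCPathVia G D c₁ c₂ m g) (hg' : IsCPathVia G D' c₃ c₄ m' g')
    (hD : IsCompAvoiding G C D) (hD' : IsCompAvoiding G C D') (hne : D ≠ D') :
    ∀ i j, i ≠ 0 → i ≠ Fin.last m → j ≠ 0 → j ≠ Fin.last m' →
      g i ≠ g' j ∧ ¬ G.Adj (g i) (g' j) := fun i j hi0 hil hj0 hjl =>
  hD.ne_and_not_adj hD' hne (hg.2.2.2.2 i hi0 hil) (hg'.2.2.2.2 j hj0 hjl)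

theorem hasTheta_of_three_fullComps {D₁ D₂ D₃ : Set V} (hc₁ : c₁ ∈ C) (hc₂ : c₂ ∈ C)
    (hne : c₁ ≠ c₂) (hnadj : ¬ G.Adj c₁ c₂)
    (h₁ : IsFullComp G C D₁) (h₂ : IsFullComp G C D₂) (h₃ : IsFullComp G C D₃)
    (h₁₂ : D₁ ≠ D₂) (h₁₃ : D₁ ≠ D₃) (h₂₃ : D₂ ≠ D₃) : HasTheta G := by
  obtain ⟨m₁, g₁, hg₁⟩ := h₁.exists_isCPathVia hc₁ hc₂ hne hnadj
  obtain ⟨m₂, g₂, hg₂⟩ := h₂.exists_isCPathVia hc₁ hc₂ hne hnadj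
  obtain ⟨m₃, g₃, hg₃⟩ := h₃.exists_isCPathVia hc₁ hc₂ hne hnadj
  refine ⟨m₁, m₂, m₃, g₁, g₂, g₃, hg₁.1, hg₂.1, hg₃.1, hg₁.2.1, hg₂.2.1, hg₃.2.1, ?_, ?_, ?_,
    ?_, ?_, hg₁.ne_and_not_adj hg₂ h₁.1 h₂.1 h₁₂, hg₁.ne_and_not_adj hg₃ h₁.1 h₃.1 h₁₃,
    hg₂.ne_and_not_adj hg₃ h₂.1 h₃.1 h₂₃⟩
  · rw [hg₂.2.2.1, hg₁.2.2.1]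
  · rw [hg₃.2.2.1, hg₁.2.2.1]
  · rw [hg₂.2.2.2.1, hg₁.2.2.2.1]
  · rw [hg₃.2.2.2.1, hg₁.2.2.2.1]
  · rwa [hg₁.2.2.1, hg₁.2.2.2.1]

end Theta

/-- In a graph of class 𝒞, a minimal separator that is not a clique has exactly two full
components. -/
theorem proper_separator_two_full_components {V : Type*} (G : SimpleGraph V)
    (hG : ClassC G) (C : Set V) (hmin : IsMinSep G C) (hncl : ¬ G.IsClique C) :
    ∃ D₁ D₂ : Set V, D₁ ≠ D₂ ∧ IsFullComp G C D₁ ∧ IsFullComp G C D₂ ∧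
      ∀ D : Set V, IsFullComp G C D → D = D₁ ∨ D = D₂ := by
  obtain ⟨a, b, hsep, hminimal⟩ := hmin
  have hL := isFullComp_compAvoiding hsep hminimal
  have hR := isFullComp_compAvoiding hsep.symm fun C' hC' h => hminimal C' hC' h.symm
  obtain ⟨c₁, hc₁, c₂, hc₂, hne, hnadj⟩ : ∃ c₁ ∈ C, ∃ c₂ ∈ C, c₁ ≠ c₂ ∧ ¬ G.Adj c₁ c₂ := by
    simpa [SimpleGraph.IsClique, Set.Pairwise] using hncl
  refine ⟨_, _, hsep.compAvoiding_ne, hL, hR, fun D hD => ?_⟩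
  by_contra! hD'
  exact hG.2.2.2.1 (hasTheta_of_three_fullComps hc₁ hc₂ hne hnadj hL hR hD
    hsep.compAvoiding_ne (Ne.symm hD'.1) (Ne.symm hD'.2))
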